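/- There exists a consistent case law database DB, case description CaseDesc, and court crt, and a set F of formulas, such that F is permitted in DB under CaseDesc and crt, but the single conjunction ⋀_{f∈F} f is not permitted. (Concretely, with CaseDesc = A and DB containing assessment cases deciding A⇒B and B⇒¬A at different same-level courts, F = {A⇒B, B⇒¬A} is permitted but (A⇒B) ∧ (B⇒¬A) is not, since referencing both cases would make KB_W ∧ CaseDesc ∧ facts entail ⊥.) -/
import Mathlib


/- PriCL: a formalization of the privacy case-law framework.
   The underlying logic is taken semantically: a formula is a predicate on
   possible worlds `W`; entailment, ⊤, ⊥, ∧, ∨, ¬ are the semantic ones,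
   which satisfy all requirements of the framework (monotone entailment etc.). -/

open Classical
noncomputable section

namespace PriCL

/-- Formulas of the underlying logic (semantic view). -/
abbrev Form (W : Type) := W → Prop

namespace Form
variable {W : Type}
/-- Entailment `A ⊨ B`. -/
def ent (A B : Form W) : Prop := ∀ w, A w → B w
def top : Form W := fun _ => True
def bot : Form W := fun _ => False
def and (A B : Form W) : Form W := fun w => A w ∧ B w
def or (A B : Form W) : Form W := fun w => A w ∨ B w
def not (A : Form W) : Form W := fun w => ¬ A w
def imp (A B : Form W) : Form W := fun w => A w → B w
end Form

/-- Conjunction of a finite list of formulas. -/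
def conjList {W : Type} (l : List (Form W)) : Form W := l.foldr Form.and Form.top

/-- Labels of proof-tree leaves: axiom, assessment, or reference to a case id. -/
inductive Lab (CI : Type) where
  | ax : Lab CI
  | assess : Lab CI
  | ref : CI → Lab CI

/-- Proof trees: leaves carry a prerequisite `pre` and a `fact`, inner nodes
    carry a formula and are AND- or OR-steps over finitely many children. -/
inductive PTree (W CI : Type) where
  | leaf (pre fact : Form W) (lab : Lab CI)
  | node (f : Form W) (isAnd : Bool) (n : ℕ) (children : Fin n → PTree W CI)

namespace PTree
variable {W CI : Type}

/-- The formula at the root of the tree (for a leaf, its fact). -/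
def rootF : PTree W CI → Form W
  | leaf _ fact _ => fact
  | node f _ _ _ => f

/-- Prerequisites: AND-nodes conjoin, OR-nodes disjoin children prerequisites. -/
def pres : PTree W CI → Form W
  | leaf pre _ _ => pre
  | node _ true _ c => fun w => ∀ i, (pres (c i)) w
  | node _ false _ c => fun w => ∃ i, (pres (c i)) w

/-- Facts, combined analogously to prerequisites. -/
def facts : PTree W CI → Form W
  | leaf _ fact _ => fact
  | node _ true _ c => fun w => ∀ i, (facts (c i)) w
  | node _ false _ c => fun w => ∃ i, (facts (c i)) w

/-- Condition (iv) of case consistency: each inner node is entailed by the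
    conjunction (AND) resp. disjunction (OR) of its children. -/
def stepsOk : PTree W CI → Prop
  | leaf _ _ _ => True
  | node f true _ c =>
      Form.ent (fun w => ∀ i, rootF (c i) w) f ∧ ∀ i, stepsOk (c i)
  | node f false _ c =>
      Form.ent (fun w => ∃ i, rootF (c i) w) f ∧ ∀ i, stepsOk (c i)

/-- For Axiom leaves we require `pre = fact`. -/
def axOk : PTree W CI → Prop
  | leaf pre fact Lab.ax => pre = fact
  | leaf _ _ _ => True
  | node _ _ _ c => ∀ i, axOk (c i)

/-- The tree contains no Assess-labeled node. -/
def assessFree : PTree W CI → Prop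
  | leaf _ _ Lab.assess => False
  | leaf _ _ _ => True
  | node _ _ _ c => ∀ i, assessFree (c i)

/-- The set of leaves (as pre/fact/label triples). -/
def leaves : PTree W CI → Set (Form W × Form W × Lab CI)
  | leaf pre fact lab => {(pre, fact, lab)}
  | node _ _ _ c => { x | ∃ i, x ∈ leaves (c i) }

/-- The list of leaves, in left-to-right order. -/
def leavesList : PTree W CI → List (Form W × Form W × Lab CI)
  | leaf pre fact lab => [(pre, fact, lab)]
  | node _ _ _ c => (List.ofFn fun i => leavesList (c i)).flatten

/-- All subtrees (= nodes, identified with the subtree rooted there). -/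
def subtrees : PTree W CI → Set (PTree W CI)
  | leaf pre fact lab => {leaf pre fact lab}
  | node f b n c => insert (node f b n c) { t | ∃ i, t ∈ subtrees (c i) }

/-- Replace the precondition of every node in `N` by ⊥ (used for warranting). -/
def blockTree (N : Set (PTree W CI)) : PTree W CI → PTree W CI
  | leaf pre fact lab =>
      if leaf pre fact lab ∈ N then leaf Form.bot fact lab else leaf pre fact lab
  | node f b n c => node f b n (fun i => blockTree N (c i))

end PTree

/-- A case: decision formula, case description, proof tree, and court. -/
structure Case (W CI Court : Type) where
  df : Form W
  desc : Form W
  tree : PTree W CI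
  crt : Court

namespace Case
variable {W CI Court : Type}
def presC (C : Case W CI Court) : Form W := C.tree.pres
def factsC (C : Case W CI Court) : Form W := C.tree.facts
/-- Structural well-formedness: the root carries the decision formula, and
    Axiom leaves have `pre = fact`. -/
def wf (C : Case W CI Court) : Prop := C.tree.rootF = C.df ∧ C.tree.axOk
end Case

/-- Case consistency (Definition "Case Consistency"). -/
def consistentCase {W CI Court : Type} (KB : Form W) (C : Case W CI Court) : Prop :=
  C.wf ∧
  ¬ Form.ent (KB.and C.desc) Form.bot ∧
  Form.ent (KB.and C.desc) C.presC ∧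
  ¬ Form.ent ((KB.and C.desc).and C.factsC) Form.bot ∧
  C.tree.stepsOk

/-- A case law database: world knowledge, the cases in temporal order (the
    list order is the time order ≤ₜ), case identifiers `mu`, court-dependent
    must-agree / may-ref relations, and time-indexed unwarranted nodes `U`. -/
structure CLD (W CI Court : Type) where
  KB : Form W
  cases : List (Case W CI Court)
  mu : ℕ → CI
  mustAgree : Court → Court → Prop
  mayRef : Court → Court → Prop
  U : ℕ → Set (PTree W CI)

namespace CLD
variable {W CI Court : Type}

/-- All unwarranted nodes of the database. -/
def Uall (DB : CLD W CI Court) : Set (PTree W CI) := ⋃ j < DB.cases.length, DB.U j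

/-- Warranted (sub)case w.r.t. a set `N` of unwarranted nodes
    (Definition "Warranted Subcase"). -/
def warrantedCase (DB : CLD W CI Court) (N : Set (PTree W CI)) (C : Case W CI Court) : Prop :=
  consistentCase DB.KB { C with tree := PTree.blockTree N C.tree }

/-- Structural requirements: injective identifiers, must-agree ⊆ may-ref,
    and monotonicity of the unwarranted sets along the timeline. -/
def wfStruct (DB : CLD W CI Court) : Prop :=
  (∀ i j, i < DB.cases.length → j < DB.cases.length → DB.mu i = DB.mu j → i = j) ∧
  (∀ c1 c2, DB.mustAgree c1 c2 → DB.mayRef c1 c2) ∧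
  (∀ i j, i ≤ j → DB.U i ⊆ DB.U j)

def casewiseConsistent (DB : CLD W CI Court) : Prop :=
  ∀ C ∈ DB.cases, consistentCase DB.KB C

/-- Correct referencing of the case `C` sitting at time index `jC`
    (Definition "Correct Case Reference"): each Ref-leaf points to a strictly
    earlier case containing a warranted subcase deciding the fact, may-ref
    holds, and KB ∧ pre entails the referenced prerequisites. -/
def refConsistentAt (DB : CLD W CI Court) (jC : ℕ) (C : Case W CI Court) : Prop :=
  ∀ pre fact id, (pre, fact, Lab.ref id) ∈ C.tree.leaves →
    ∃ jD, jD < jC ∧ ∃ hD : jD < DB.cases.length, DB.mu jD = id ∧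
      ∃ s ∈ (DB.cases.get ⟨jD, hD⟩).tree.subtrees,
        s.rootF = fact ∧
        DB.warrantedCase (DB.U jC)
          ⟨fact, (DB.cases.get ⟨jD, hD⟩).desc, s, (DB.cases.get ⟨jD, hD⟩).crt⟩ ∧
        DB.mayRef C.crt (DB.cases.get ⟨jD, hD⟩).crt ∧
        Form.ent (DB.KB.and pre) s.pres

def refConsistent (DB : CLD W CI Court) : Prop :=
  ∀ j, ∀ h : j < DB.cases.length, DB.refConsistentAt j (DB.cases.get ⟨j, h⟩)

/-- Case conflict (Definition "Case Conflict"): `C2` is warranted w.r.t. `N`,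
    the prerequisites are compatible, the facts contradict, and must-agree
    holds between the courts. -/
def conflict (DB : CLD W CI Court) (N : Set (PTree W CI)) (C1 C2 : Case W CI Court) : Prop :=
  DB.warrantedCase N C2 ∧
  ¬ Form.ent ((DB.KB.and C1.presC).and C2.presC) Form.bot ∧
  Form.ent ((DB.KB.and C1.factsC).and C2.factsC) Form.bot ∧
  DB.mustAgree C1.crt C2.crt

def hierConsistent (DB : CLD W CI Court) : Prop :=
  ∀ j, ∀ h : j < DB.cases.length, ∀ D ∈ DB.cases,
    ¬ DB.conflict (DB.U j) (DB.cases.get ⟨j, h⟩) D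

/-- Consistent warranting: `U` contains every Ref node whose referenced
    subcase is unwarranted. -/
def warrantsConsistently (DB : CLD W CI Court) : Prop :=
  ∀ j, j < DB.cases.length →
  ∀ C ∈ DB.cases, ∀ pre fact id, (pre, fact, Lab.ref id) ∈ C.tree.leaves →
    (∀ jD, ∀ hD : jD < DB.cases.length, DB.mu jD = id →
      ∀ s ∈ (DB.cases.get ⟨jD, hD⟩).tree.subtrees, s.rootF = fact →
        ¬ DB.warrantedCase (DB.U j)
            ⟨fact, (DB.cases.get ⟨jD, hD⟩).desc, s, (DB.cases.get ⟨jD, hD⟩).crt⟩) →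
    PTree.leaf pre fact (Lab.ref id) ∈ DB.U j

/-- Database consistency. -/
def consistent (DB : CLD W CI Court) : Prop :=
  DB.wfStruct ∧ DB.casewiseConsistent ∧ DB.refConsistent ∧
  DB.hierConsistent ∧ DB.warrantsConsistently

/-- Append a new case at the end of the timeline, with a fresh identifier. -/
def snoc (DB : CLD W CI Court) (C : Case W CI Court) (id : CI) : CLD W CI Court :=
  { DB with cases := DB.cases ++ [C],
            mu := fun j => if j = DB.cases.length then id else DB.mu j }

/-- Append several new cases at the end of the timeline. -/
def appendCases (DB : CLD W CI Court) (Cs : List (Case W CI Court)) (ids : ℕ → CI) :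
    CLD W CI Court :=
  { DB with cases := DB.cases ++ Cs,
            mu := fun j => if j < DB.cases.length then DB.mu j else ids (j - DB.cases.length) }

/-- `f` is permitted in `DB` under circumstances `cd` and court `crt`. -/
def permitted (DB : CLD W CI Court) (f cd : Form W) (crt : Court) : Prop :=
  ∃ (C : Case W CI Court) (id : CI),
    C.df = f ∧ C.desc = cd ∧ C.crt = crt ∧ C.tree.assessFree ∧
    (DB.snoc C id).consistent

/-- A finite set (list) `fs` of formulas is permitted: Assess-free cases deciding
    the formulas of `fs` can be inserted, in some order, at the end of the
    timeline, preserving consistency. -/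
def permittedList (DB : CLD W CI Court) (fs : List (Form W)) (cd : Form W) (crt : Court) : Prop :=
  ∃ (Cs : List (Case W CI Court)) (ids : ℕ → CI),
    (Cs.map Case.df).Perm fs ∧
    (∀ C ∈ Cs, C.desc = cd ∧ C.crt = crt ∧ C.tree.assessFree) ∧
    (DB.appendCases Cs ids).consistent

/-- `(pre, fact)` is an Assess-labeled leaf of some case of `DB`. -/
def assessLeaf (DB : CLD W CI Court) (pre fact : Form W) : Prop :=
  ∃ C ∈ DB.cases, (pre, fact, (Lab.assess : Lab CI)) ∈ C.tree.leaves

/-- `A` is a supporting set for `f` under circumstances `cd`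
    (Definition "Supporting set", conditions (1)–(3)). -/
def supports (DB : CLD W CI Court) (cd f : Form W) (A : List (Form W × Form W)) : Prop :=
  (∀ a ∈ A, DB.assessLeaf a.1 a.2) ∧
  Form.ent (DB.KB.and cd) (conjList (A.map Prod.fst)) ∧
  Form.ent ((DB.KB.and cd).and (conjList (A.map Prod.snd))) f ∧
  ¬ Form.ent ((DB.KB.and cd).and (conjList (A.map Prod.snd))) Form.bot

/-- The supporting set is warranted: none of its nodes is unwarranted
    w.r.t. any case of the database. -/
def warrantedSupp (DB : CLD W CI Court) (A : List (Form W × Form W)) : Prop :=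
  ∀ a ∈ A, ∀ j, j < DB.cases.length →
    PTree.leaf a.1 a.2 (Lab.assess : Lab CI) ∉ DB.U j

/-- The trivial proof tree with root ⊤ and one Ref-leaf per element of `A`. -/
def trivialTree (A : List (Form W × Form W)) (ids : ℕ → CI) : PTree W CI :=
  PTree.node Form.top true A.length
    (fun i => PTree.leaf (A.get ⟨i, i.isLt⟩).1 (A.get ⟨i, i.isLt⟩).2 (Lab.ref (ids i)))

/-- The supporting set `A` is consistent with `DB`: adding the trivial case
    referencing all its elements yields a consistent database. -/
def consistentWith (DB : CLD W CI Court) (cd : Form W) (crt : Court)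
    (A : List (Form W × Form W)) : Prop :=
  ∃ (ids : ℕ → CI) (fid : CI),
    (DB.snoc ⟨Form.top, cd, trivialTree A ids, crt⟩ fid).consistent

/-- Replace the case at time index `j`. -/
def replace (DB : CLD W CI Court) (j : ℕ) (C' : Case W CI Court) : CLD W CI Court :=
  { DB with cases := DB.cases.set j C' }

end CLD

end PriCL

namespace PriCL

/-! ### Auxiliary construction for Statement 3 -/

lemma facts_ent_rootF {W CI : Type} (t : PTree W CI) (h : t.stepsOk) :
    Form.ent t.facts t.rootF := by
  induction t with
  | leaf pre fact lab => exact fun w hw => hw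
  | node f isAnd n c ih =>
    cases isAnd with
    | true =>
      obtain ⟨h1, h2⟩ := h
      exact fun w hw => h1 w (fun i => ih i (h2 i) w (hw i))
    | false =>
      obtain ⟨h1, h2⟩ := h
      exact fun w hw => h1 w (by obtain ⟨i, hi⟩ := hw; exact ⟨i, ih i (h2 i) w hi⟩)

lemma blockTree_empty_leaf {W CI : Type} (pre fact : Form W) (lab : Lab CI) :
    PTree.blockTree (∅ : Set (PTree W CI)) (PTree.leaf pre fact lab) =
      PTree.leaf pre fact lab := by
  simp [PTree.blockTree]

abbrev W3 := Prop × Prop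
def fA : Form W3 := fun w => w.1
def fB : Form W3 := fun w => w.2
def fAB : Form W3 := Form.imp fA fB
def fBnA : Form W3 := Form.imp fB (Form.not fA)

/-- A one-leaf case with description `fA`, deciding `f`, with leaf label `lab`. -/
def leafCase (f : Form W3) (lab : Lab ℕ) : Case W3 ℕ Unit :=
  ⟨f, fA, PTree.leaf fA f lab, ()⟩

lemma cons_leafCase (f : Form W3) (lab : Lab ℕ)
    (hax : (PTree.leaf fA f lab).axOk) (w : W3) (hw1 : fA w) (hw2 : f w) :
    consistentCase (Form.top : Form W3) (leafCase f lab) := by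
  refine ⟨⟨rfl, hax⟩, ?_, ?_, ?_, trivial⟩
  · intro h; exact h w ⟨trivial, hw1⟩
  · exact fun v hv => hv.2
  · intro h; exact h w ⟨⟨trivial, hw1⟩, hw2⟩

lemma satAB : fAB ((True : Prop), (True : Prop)) := fun _ => trivial
lemma satBnA : fBnA ((True : Prop), (False : Prop)) := fun h => h.elim

def case0 : Case W3 ℕ Unit := leafCase fAB Lab.assess
def case1 : Case W3 ℕ Unit := leafCase fBnA Lab.assess

def DB3 : CLD W3 ℕ Unit :=
  { KB := Form.top
    cases := [case0, case1]
    mu := id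
    mustAgree := fun _ _ => False
    mayRef := fun _ _ => True
    U := fun _ => ∅ }

lemma cons_case0 : consistentCase (Form.top : Form W3) case0 :=
  cons_leafCase fAB Lab.assess trivial (True, True) trivial satAB

lemma cons_case1 : consistentCase (Form.top : Form W3) case1 :=
  cons_leafCase fBnA Lab.assess trivial (True, False) trivial satBnA

lemma DB3_consistent : DB3.consistent := by
  refine ⟨⟨fun i j _ _ h => h, fun _ _ _ => trivial, fun _ _ _ _ h => h⟩, ?_, ?_, ?_, ?_⟩
  · intro C hC
    simp only [DB3, List.mem_cons, List.not_mem_nil, or_false] at hC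
    rcases hC with rfl | rfl
    · exact cons_case0
    · exact cons_case1
  · intro j h pre fact id hmem
    exfalso
    have hj : j < 2 := h
    interval_cases j <;>
      simp [DB3, case0, case1, leafCase, PTree.leaves, List.get] at hmem
  · exact fun j h D hD hc => hc.2.2.2
  · intro j hj C hC pre fact id hmem _
    exfalso
    simp only [DB3, List.mem_cons, List.not_mem_nil, or_false] at hC
    rcases hC with rfl | rfl <;>
      simp [case0, case1, leafCase, PTree.leaves] at hmem

def case2 : Case W3 ℕ Unit := leafCase fAB (Lab.ref 0)
def case3 : Case W3 ℕ Unit := leafCase fBnA (Lab.ref 1)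

def DB4 : CLD W3 ℕ Unit := DB3.appendCases [case2, case3] (fun i => i + 2)

lemma DB4_cases : DB4.cases = [case0, case1, case2, case3] := rfl

lemma DB4_len : DB4.cases.length = 4 := rfl

lemma DB4_mu : ∀ j < 4, DB4.mu j = j := by
  intro j hj
  show (if j < 2 then j else (j - 2) + 2) = j
  split <;> omega

/-- The referenced subcases (the leaves of case0/case1) are warranted. -/
lemma warranted0 : DB4.warrantedCase ∅ ⟨fAB, case0.desc, case0.tree, case0.crt⟩ := by
  unfold CLD.warrantedCase
  simp only [case0, leafCase, blockTree_empty_leaf]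
  exact cons_case0

lemma warranted1 : DB4.warrantedCase ∅ ⟨fBnA, case1.desc, case1.tree, case1.crt⟩ := by
  unfold CLD.warrantedCase
  simp only [case1, leafCase, blockTree_empty_leaf]
  exact cons_case1

lemma DB4_consistent : DB4.consistent := by
  refine ⟨⟨?_, fun _ _ _ => trivial, fun _ _ _ _ h => h⟩, ?_, ?_, ?_, ?_⟩
  · -- mu injective
    intro i j hi hj h
    have hi4 : i < 4 := hi
    have hj4 : j < 4 := hj
    rw [DB4_mu i hi4, DB4_mu j hj4] at h
    exact h
  · -- casewiseConsistent
    intro C hC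
    rw [DB4_cases] at hC
    simp only [List.mem_cons, List.not_mem_nil, or_false] at hC
    rcases hC with rfl | rfl | rfl | rfl
    · exact cons_case0
    · exact cons_case1
    · exact cons_leafCase fAB (Lab.ref 0) trivial (True, True) trivial satAB
    · exact cons_leafCase fBnA (Lab.ref 1) trivial (True, False) trivial satBnA
  · -- refConsistent
    intro j h pre fact id hmem
    have hj : j < 4 := h
    interval_cases j
    · exfalso; simp [DB4, DB3, case0, leafCase, PTree.leaves, CLD.appendCases] at hmem
    · exfalso; simp [DB4, DB3, case1, leafCase, PTree.leaves, CLD.appendCases] at hmem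
    · -- case2, referencing case0
      have hmem' : (pre, fact, Lab.ref id) = (fA, fAB, Lab.ref 0) := by
        simpa [DB4, DB3, case2, leafCase, PTree.leaves, CLD.appendCases] using hmem
      obtain ⟨h1, h2, h3⟩ : pre = fA ∧ fact = fAB ∧ id = 0 := by
        simpa [Prod.ext_iff, Lab.ref.injEq] using hmem'
      subst h1; subst h2; subst h3
      refine ⟨0, by norm_num, by rw [DB4_len]; norm_num, DB4_mu 0 (by norm_num), ?_⟩
      refine ⟨case0.tree, rfl, rfl, warranted0, trivial, fun v hv => hv.2⟩
    · -- case3, referencing case1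
      have hmem' : (pre, fact, Lab.ref id) = (fA, fBnA, Lab.ref 1) := by
        simpa [DB4, DB3, case3, leafCase, PTree.leaves, CLD.appendCases] using hmem
      obtain ⟨h1, h2, h3⟩ : pre = fA ∧ fact = fBnA ∧ id = 1 := by
        simpa [Prod.ext_iff, Lab.ref.injEq] using hmem'
      subst h1; subst h2; subst h3
      refine ⟨1, by norm_num, by rw [DB4_len]; norm_num, DB4_mu 1 (by norm_num), ?_⟩
      refine ⟨case1.tree, rfl, rfl, warranted1, trivial, fun v hv => hv.2⟩
  · -- hierConsistent
    exact fun j h D hD hc => hc.2.2.2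
  · -- warrantsConsistently
    intro j hj C hC pre fact id hmem hhyp
    exfalso
    rw [DB4_cases] at hC
    simp only [List.mem_cons, List.not_mem_nil, or_false] at hC
    rcases hC with rfl | rfl | rfl | rfl
    · simp [case0, leafCase, PTree.leaves] at hmem
    · simp [case1, leafCase, PTree.leaves] at hmem
    · have hmem' : (pre, fact, Lab.ref id) = (fA, fAB, Lab.ref 0) := by
        simpa [case2, leafCase, PTree.leaves] using hmem
      obtain ⟨h1, h2, h3⟩ : pre = fA ∧ fact = fAB ∧ id = 0 := by
        simpa [Prod.ext_iff, Lab.ref.injEq] using hmem'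
      subst h1; subst h2; subst h3
      exact hhyp 0 (by rw [DB4_len]; norm_num) (DB4_mu 0 (by norm_num)) case0.tree rfl rfl warranted0
    · have hmem' : (pre, fact, Lab.ref id) = (fA, fBnA, Lab.ref 1) := by
        simpa [case3, leafCase, PTree.leaves] using hmem
      obtain ⟨h1, h2, h3⟩ : pre = fA ∧ fact = fBnA ∧ id = 1 := by
        simpa [Prod.ext_iff, Lab.ref.injEq] using hmem'
      subst h1; subst h2; subst h3
      exact hhyp 1 (by rw [DB4_len]; norm_num) (DB4_mu 1 (by norm_num)) case1.tree rfl rfl warranted1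

/-- there are a consistent database, circumstances and court, and
    a set (list) F of formulas such that F is permitted but the single
    conjunction ⋀_{f∈F} f is not permitted. -/
theorem exists_set_permitted_not_conj_permitted :
    ∃ (W CI Court : Type) (DB : CLD W CI Court) (cd : Form W) (crt : Court)
      (F : List (Form W)),
      DB.consistent ∧
      DB.permittedList F cd crt ∧
      ¬ DB.permitted (conjList F) cd crt := by
  refine ⟨W3, ℕ, Unit, DB3, fA, (), [fAB, fBnA], DB3_consistent, ?_, ?_⟩
  · -- permittedList
    refine ⟨[case2, case3], fun i => i + 2, ?_, ?_, DB4_consistent⟩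
    · simp [case2, case3, leafCase]
    · intro C hC
      simp only [List.mem_cons, List.not_mem_nil, or_false] at hC
      rcases hC with rfl | rfl <;> exact ⟨rfl, rfl, trivial⟩
  · -- not permitted
    rintro ⟨C, id, hdf, hdesc, hcrt, hfree, hcons⟩
    have hCmem : C ∈ (DB3.snoc C id).cases := by
      simp [CLD.snoc]
    obtain ⟨⟨hroot, _⟩, _, _, hnb, hsteps⟩ := hcons.2.1 C hCmem
    apply hnb
    rintro w ⟨⟨-, hcd⟩, hf⟩
    have hr : C.tree.rootF w := facts_ent_rootF C.tree hsteps w hf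
    rw [hroot, hdf] at hr
    have ha : fA w := hdesc ▸ hcd
    exact hr.2.1 (hr.1 ha) ha

end PriCL
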